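/- Let 0 < s ≤ 1 and let u : ℝ → ℝ satisfy TV^s u < +∞ and u ∈ L¹(ℝ) (i.e. u is integrable). Then lim_{x→+∞} u(x) = 0 and lim_{x→−∞} u(x) = 0. Consequently, if in addition TV^s u = 0, then u vanishes identically; hence the semi-norm |u|_{BV^s} = (TV^s u)^s is a norm on BV^s(ℝ) ∩ L¹(ℝ). -/

import Mathlib

/-!
Choose a partition whose variation sum is within `ε ^ (1 / s)` of `TV^s u`. Appending two
points `a < b` beyond its last point shows `|u b - u a| ≤ ε`, so `u` is uniformly Cauchy near
`+∞`. An integrable function cannot stay above `ε` on the infinite-measure half-line `[N, ∞)`,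
so the limit is `0`. The case `-∞` follows by applying this to `u (-x)`, whose variation is no
larger, and `TV^s u = 0` forces `u` to be constant, hence zero.
-/

open scoped ENNReal

/-- The `s`-fractional total variation of a function `u : ℝ → ℝ`. -/
noncomputable def TVs (s : ℝ) (u : ℝ → ℝ) : ℝ≥0∞ :=
  ⨆ (n : ℕ) (x : Fin (n + 1) → ℝ) (_ : StrictMono x),
    ∑ i : Fin n, ENNReal.ofReal (|u (x i.succ) - u (x i.castSucc)| ^ (1 / s))

open Filter MeasureTheory Topology

theorem Fin.strictMono_snoc {α : Type*} [Preorder α] {n : ℕ} {x : Fin (n + 1) → α}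
    (hx : StrictMono x) {a : α} (ha : x (Fin.last n) < a) :
    StrictMono (Fin.snoc x a : Fin (n + 2) → α) := by
  refine Fin.strictMono_iff_lt_succ.2 fun i => ?_
  cases i using Fin.lastCases with
  | last => simpa using ha
  | cast j =>
    simpa [-Fin.castSucc_succ, Fin.succ_castSucc] using hx (Fin.castSucc_lt_succ (i := j))

noncomputable def partitionSum (s : ℝ) (u : ℝ → ℝ) {n : ℕ} (x : Fin (n + 1) → ℝ) : ℝ≥0∞ :=
  ∑ i : Fin n, ENNReal.ofReal (|u (x i.succ) - u (x i.castSucc)| ^ (1 / s))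

section

variable {s : ℝ} {u : ℝ → ℝ}

theorem partitionSum_le_TVs {n : ℕ} {x : Fin (n + 1) → ℝ} (hx : StrictMono x) :
    partitionSum s u x ≤ TVs s u :=
  le_iSup₂_of_le n x (le_iSup_of_le hx le_rfl)

theorem partitionSum_snoc {n : ℕ} (x : Fin (n + 1) → ℝ) (a : ℝ) :
    partitionSum s u (Fin.snoc x a : Fin (n + 2) → ℝ) =
      partitionSum s u x + ENNReal.ofReal (|u a - u (x (Fin.last n))| ^ (1 / s)) := by
  simp [partitionSum, Fin.sum_univ_castSucc (n := n), -Fin.castSucc_succ, Fin.succ_castSucc]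

theorem partitionSum_comp_neg {n : ℕ} (x : Fin (n + 1) → ℝ) :
    partitionSum s (fun t => u (-t)) x = partitionSum s u (fun i => -x i.rev) := by
  rw [partitionSum, ← Equiv.sum_comp Fin.revPerm]
  simp [partitionSum, Fin.rev_succ, Fin.rev_castSucc, abs_sub_comm]

theorem TVs_comp_neg_le : TVs s (fun t => u (-t)) ≤ TVs s u :=
  iSup_le fun _ => iSup₂_le fun x hx => (partitionSum_comp_neg x).trans_le <|
    partitionSum_le_TVs fun _ _ hij => neg_lt_neg (hx (Fin.rev_lt_rev.2 hij))

theorem ofReal_rpow_abs_sub_le_TVs {a b : ℝ} (hab : a < b) :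
    ENNReal.ofReal (|u b - u a| ^ (1 / s)) ≤ TVs s u := by
  have h := partitionSum_le_TVs (s := s) (u := u)
    (Fin.strictMono_snoc (x := fun _ : Fin 1 => a) (Fin.strictMono_iff_lt_succ.2 Fin.elim0) hab)
  rw [partitionSum_snoc] at h
  simpa [partitionSum] using h

theorem exists_partitionSum_add_gt (hu : TVs s u ≠ ⊤) {c : ℝ≥0∞} (hc : c ≠ 0) :
    ∃ n, ∃ x : Fin (n + 1) → ℝ, StrictMono x ∧ TVs s u < partitionSum s u x + c := by
  have h : TVs s u < TVs s u + c := ENNReal.lt_add_right hu hc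
  conv_rhs at h => rw [TVs]
  simp only [ENNReal.iSup_add, lt_iSup_iff] at h
  obtain ⟨n, x, h⟩ := h
  by_cases hx : StrictMono x
  · exact ⟨n, x, hx, by simpa [hx, partitionSum] using h⟩
  · -- the supremum over `StrictMono x` is empty, so `h` reads `TVs s u < 0 + c`
    exact ⟨0, fun _ => 0, Fin.strictMono_iff_lt_succ.2 Fin.elim0,
      by simpa [hx, partitionSum] using h⟩

theorem abs_le_of_ofReal_rpow_le (hs : 0 < s) {d ε : ℝ} (hε : 0 ≤ ε)
    (h : ENNReal.ofReal (|d| ^ (1 / s)) ≤ ENNReal.ofReal (ε ^ (1 / s))) : |d| ≤ ε :=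
  (Real.rpow_le_rpow_iff (abs_nonneg d) hε (by positivity)).1
    ((ENNReal.ofReal_le_ofReal_iff (by positivity)).1 h)

theorem eq_of_TVs_eq_zero (hs : 0 < s) (h0 : TVs s u = 0) (a b : ℝ) : u a = u b := by
  wlog hab : a < b generalizing a b
  · rcases (not_lt.1 hab).eq_or_lt with rfl | hba
    · rfl
    · exact (this b a hba).symm
  have hjump := ofReal_rpow_abs_sub_le_TVs (s := s) (u := u) hab
  rw [h0, ← ENNReal.ofReal_zero, ← Real.zero_rpow (one_div_pos.2 hs).ne'] at hjump
  exact (sub_eq_zero.1 (abs_nonpos_iff.1 (abs_le_of_ofReal_rpow_le hs le_rfl hjump))).symm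

theorem exists_abs_sub_le_of_TVs_lt_top (hs : 0 < s) (hu : TVs s u < ⊤) {ε : ℝ}
    (hε : 0 < ε) :
    ∃ N, ∀ a ≥ N, ∀ b ≥ N, |u a - u b| ≤ ε := by
  obtain ⟨n, x, hx, hlt⟩ := exists_partitionSum_add_gt hu.ne
    (ENNReal.ofReal_pos.2 (Real.rpow_pos_of_pos hε (1 / s))).ne'
  refine ⟨x (Fin.last n) + 1, fun a ha b hb => ?_⟩
  wlog hab : a < b generalizing a b
  · rcases (not_lt.1 hab).eq_or_lt with rfl | hba
    · simpa using hε.le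
    · rw [abs_sub_comm]
      exact this b hb a ha hba
  have hxa : x (Fin.last n) < a := by linarith
  have hsnoc := partitionSum_le_TVs (s := s) (u := u)
    (Fin.strictMono_snoc (Fin.strictMono_snoc hx hxa) (by simpa using hab))
  rw [partitionSum_snoc, partitionSum_snoc, Fin.snoc_last] at hsnoc
  have hS : partitionSum s u x ≠ ⊤ := ((partitionSum_le_TVs hx).trans_lt hu).ne
  rw [abs_sub_comm]
  refine abs_le_of_ofReal_rpow_le hs hε.le ((ENNReal.add_le_add_iff_left hS).1 ?_)
  calc partitionSum s u x + ENNReal.ofReal (|u b - u a| ^ (1 / s))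
      ≤ partitionSum s u x + ENNReal.ofReal (|u a - u (x (Fin.last n))| ^ (1 / s))
          + ENNReal.ofReal (|u b - u a| ^ (1 / s)) := by gcongr; exact le_self_add
    _ ≤ TVs s u := hsnoc
    _ ≤ _ := hlt.le

end

theorem MeasureTheory.Integrable.tendsto_atTop_zero_of_cauchy {u : ℝ → ℝ}
    (hint : Integrable u) (hcauchy : ∀ ε > 0, ∃ N, ∀ a ≥ N, ∀ b ≥ N, |u a - u b| ≤ ε) :
    Tendsto u atTop (𝓝 0) := by
  refine Metric.tendsto_atTop.2 fun ε hε => ?_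
  obtain ⟨N, hN⟩ := hcauchy (ε / 2) (half_pos hε)
  obtain ⟨x₀, hx₀N, hx₀⟩ : ∃ x₀ ≥ N, |u x₀| < ε / 2 := by
    by_contra! h
    have hsub : Set.Ici N ⊆ {x | ε / 2 ≤ ‖u x‖} := h
    have := (hint.measure_norm_ge_lt_top (half_pos hε)).trans_le' (measure_mono hsub)
    exact this.ne Real.volume_Ici
  refine ⟨N, fun y hy => ?_⟩
  rw [Real.dist_eq, sub_zero]
  linarith [abs_sub_abs_le_abs_sub (u y) (u x₀), hN y hy x₀ hx₀N]

theorem bvs_l1_limits_zero_general (s : ℝ) (hs0 : 0 < s) (u : ℝ → ℝ)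
    (hu : TVs s u < ⊤) (hint : MeasureTheory.Integrable u) :
    Filter.Tendsto u Filter.atTop (nhds 0) ∧
    Filter.Tendsto u Filter.atBot (nhds 0) ∧
    (TVs s u = 0 → ∀ x : ℝ, u x = 0) := by
  have htop := hint.tendsto_atTop_zero_of_cauchy fun _ => exists_abs_sub_le_of_TVs_lt_top hs0 hu
  have hbot : Tendsto u atBot (𝓝 0) :=
    tendsto_comp_neg_atTop_iff.1 <| hint.comp_neg.tendsto_atTop_zero_of_cauchy
      fun _ => exists_abs_sub_le_of_TVs_lt_top hs0 (TVs_comp_neg_le.trans_lt hu)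
  refine ⟨htop, hbot, fun h0 x => ?_⟩
  rw [show u = fun _ => u x from funext fun y => eq_of_TVs_eq_zero hs0 h0 y x] at htop
  exact tendsto_const_nhds_iff.1 htop

/-- If `u` is in `BV^s(ℝ)` (i.e. `TVs s u < ∞`, `0 < s ≤ 1`) and `u` is integrable,
then `u` tends to `0` at `±∞`; consequently, if moreover `TVs s u = 0` then `u ≡ 0`,
so the `BV^s` semi-norm is a norm on `BV^s(ℝ) ∩ L¹(ℝ)`. -/
theorem bvs_l1_limits_zero (s : ℝ) (hs0 : 0 < s) (hs1 : s ≤ 1) (u : ℝ → ℝ)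
    (hu : TVs s u < ⊤) (hint : MeasureTheory.Integrable u) :
    Filter.Tendsto u Filter.atTop (nhds 0) ∧
    Filter.Tendsto u Filter.atBot (nhds 0) ∧
    (TVs s u = 0 → ∀ x : ℝ, u x = 0) :=
  bvs_l1_limits_zero_general s hs0 u hu hint
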